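/- arXiv:1510.00410 — 6 statements merged into one kernel-verified Lean document; each statement's English description precedes it below -/
import Mathlib

section
/- Given q ∈ ℂ, p ≥ 1 and r ∈ ℂ*, the Chebyshev equation z(k+1) − 2q·z(k) + z(k−1) = 0 has a nonzero solution z with z(k+p) = r·z(k) for all k if and only if r² − 2r·T_p(q) + 1 = 0, i.e., r = T_p(q) ± √(T_p(q)² − 1). -/
open Polynomial Polynomial.Chebyshev

private lemma cheb_shift (q : ℂ) (z : ℤ → ℂ)
    (hz : ∀ k : ℤ, z (k + 1) - 2 * q * z k + z (k - 1) = 0) :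
    ∀ (n : ℕ) (k : ℤ), z (k + n) + z (k - n) = 2 * (T ℂ (n : ℤ)).eval q * z k := by
  intro n
  induction n using Nat.twoStepInduction with
  | zero => intro k; simp [two_mul]
  | one =>
    intro k
    push_cast
    simp only [T_one, eval_X]
    linear_combination hz k
  | more n ih0 ih1 =>
    intro k
    have e2 := hz (k + ((n : ℤ) + 1))
    have e3 := hz (k - ((n : ℤ) + 1))
    have a1 : k + ((n:ℤ)+1) + 1 = k + ((n:ℤ)+2) := by ring
    have a2 : k + ((n:ℤ)+1) - 1 = k + (n:ℤ) := by ring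
    have a3 : k - ((n:ℤ)+1) + 1 = k - (n:ℤ) := by ring
    have a4 : k - ((n:ℤ)+1) - 1 = k - ((n:ℤ)+2) := by ring
    rw [a1, a2] at e2
    rw [a3, a4] at e3
    have i0 := ih0 k
    have i1 := ih1 k
    push_cast at i0 i1 ⊢
    have hT : (T ℂ ((n:ℤ)+2)).eval q =
        2*q*((T ℂ ((n:ℤ)+1)).eval q) - (T ℂ (n:ℤ)).eval q := by
      rw [T_add_two]; simp
    linear_combination e2 + e3 + 2*q*i1 - i0 - 2 * z k * hT

theorem stmt_6 (q : ℂ) (p : ℕ) (hp : 1 ≤ p) (r : ℂ) (hr : r ≠ 0) :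
    (∃ z : ℤ → ℂ, z ≠ 0 ∧ (∀ k : ℤ, z (k + 1) - 2 * q * z k + z (k - 1) = 0) ∧
        ∀ k : ℤ, z (k + p) = r * z k) ↔
      r ^ 2 - 2 * r * (T ℂ p).eval q + 1 = 0 := by
  constructor
  · rintro ⟨z, hz0, hrec, hper⟩
    obtain ⟨k, hk⟩ : ∃ k, z k ≠ 0 := by
      by_contra h; push_neg at h; exact hz0 (funext h)
    have key := cheb_shift q z hrec p k
    have h1 : z (k + p) = r * z k := hper k
    have h2 : z k = r * z (k - p) := by
      have := hper (k - p); rwa [sub_add_cancel] at this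
    have h3 : (r ^ 2 - 2 * r * (T ℂ (p:ℤ)).eval q + 1) * z k = 0 := by
      linear_combination r * key - r * h1 + h2
    rcases mul_eq_zero.mp h3 with h4 | h4
    · exact h4
    · exact absurd h4 hk
  · intro h
    obtain ⟨θ, hθ⟩ := Complex.cos_surjective q
    have hT : (T ℂ (p:ℤ)).eval q = Complex.cos (p * θ) := by
      rw [← hθ, T_complex_cos]; norm_num
    -- show r = exp(pθ i) or exp(-(pθ i))
    have he : Complex.exp ((p:ℂ)*θ*Complex.I) * Complex.exp (-((p:ℂ)*θ*Complex.I)) = 1 := by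
      rw [← Complex.exp_add]; simp
    have hc : Complex.cos ((p:ℂ) * θ) =
        (Complex.exp ((p:ℂ)*θ*Complex.I) + Complex.exp (-((p:ℂ)*θ*Complex.I)))/2 := by
      rw [Complex.cos]; ring_nf
    have hfact : (r - Complex.exp ((p:ℂ)*θ*Complex.I)) *
        (r - Complex.exp (-((p:ℂ)*θ*Complex.I))) = 0 := by
      rw [hT] at h
      linear_combination h + 2*r*hc + he
    -- helper to build solution
    have build : ∀ l : ℂ, l ≠ 0 → l + l⁻¹ = 2*q → l ^ p = r →
        (∃ z : ℤ → ℂ, z ≠ 0 ∧ (∀ k : ℤ, z (k + 1) - 2 * q * z k + z (k - 1) = 0) ∧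
          ∀ k : ℤ, z (k + p) = r * z k) := by
      intro l hl hq hlp
      refine ⟨fun k => l ^ k, ?_, ?_, ?_⟩
      · intro h0
        have : (1 : ℂ) = 0 := by simpa using congrFun h0 0
        norm_num at this
      · intro k
        show l ^ (k+1) - 2*q*l^k + l^(k-1) = 0
        rw [zpow_add_one₀ hl, zpow_sub_one₀ hl]
        have h5 : l + l⁻¹ - 2*q = 0 := by rw [hq]; ring
        linear_combination (l ^ k) * h5
      · intro k
        show l ^ (k + (p:ℤ)) = r * l ^ k
        rw [zpow_add₀ hl, ← hlp, zpow_natCast]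
        ring
    rcases mul_eq_zero.mp hfact with h4 | h4
    · refine build (Complex.exp (θ*Complex.I)) (Complex.exp_ne_zero _) ?_ ?_
      · rw [← Complex.exp_neg, ← hθ, Complex.cos]; ring_nf
      · rw [← Complex.exp_nat_mul, ← sub_eq_zero]
        rw [sub_eq_zero] at h4
        rw [h4]; ring_nf
    · refine build (Complex.exp (-(θ*Complex.I))) (Complex.exp_ne_zero _) ?_ ?_
      · rw [← Complex.exp_neg, neg_neg, ← hθ, Complex.cos]; ring_nf
      · rw [← Complex.exp_nat_mul, ← sub_eq_zero]
        rw [sub_eq_zero] at h4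
        rw [h4]; ring_nf
end

section
/- For p ≥ 1, the Chebyshev equation z(k+1) − 2q·z(k) + z(k−1) = 0 (with q real) has a nonzero p-periodic solution in ℝ if and only if q = cos(2jπ/p) for some j ∈ {0, 1, …, ⌈(p−1)/2⌉}. -/
open Real

noncomputable def cheb (q : ℝ) : ℕ → ℝ
  | 0 => 1
  | 1 => q
  | (n+2) => 2*q*cheb q (n+1) - cheb q n

lemma cheb_cos (θ : ℝ) (n : ℕ) : cheb (Real.cos θ) n = Real.cos (n * θ) := by
  induction n using Nat.strong_induction_on with
  | _ n ih =>
    match n with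
    | 0 => simp [cheb]
    | 1 => simp [cheb]
    | (n+2) =>
      rw [show cheb (Real.cos θ) (n+2) = 2*Real.cos θ*cheb (Real.cos θ) (n+1) - cheb (Real.cos θ) n from rfl,
        ih (n+1) (by omega), ih n (by omega)]
      have h1 : ((n:ℝ)+2) * θ = ((n+1) * θ) + θ := by ring
      have h2 : (n:ℝ) * θ = ((n+1) * θ) - θ := by ring
      push_cast
      rw [h1, h2, Real.cos_add, Real.cos_sub]
      ring

lemma cheb_gt_one {q : ℝ} (hq : 1 < q) : ∀ n : ℕ, 1 ≤ cheb q n ∧ cheb q n < cheb q (n+1) := by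
  intro n
  induction n with
  | zero => simpa [cheb] using hq
  | succ n ih =>
    have h1 : (1:ℝ) ≤ cheb q (n+1) := le_of_lt (lt_of_le_of_lt ih.1 ih.2)
    refine ⟨h1, ?_⟩
    have : cheb q (n+2) = 2*q*cheb q (n+1) - cheb q n := rfl
    nlinarith [ih.1, ih.2]

lemma cheb_neg (q : ℝ) (n : ℕ) : cheb (-q) n = (-1)^n * cheb q n := by
  induction n using Nat.strong_induction_on with
  | _ n ih =>
    match n with
    | 0 => simp [cheb]
    | 1 => simp [cheb]
    | (n+2) =>
      have e1 : cheb (-q) (n+2) = 2*(-q)*cheb (-q) (n+1) - cheb (-q) n := rfl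
      have e2 : cheb q (n+2) = 2*q*cheb q (n+1) - cheb q n := rfl
      rw [e1, e2, ih (n+1) (by omega), ih n (by omega)]
      ring

lemma sol_key {q : ℝ} {z : ℤ → ℝ} (h : ∀ k : ℤ, z (k + 1) - 2 * q * z k + z (k - 1) = 0) :
    ∀ (n : ℕ) (k : ℤ), z (k + n) + z (k - n) = 2 * cheb q n * z k := by
  intro n
  induction n using Nat.strong_induction_on with
  | _ n ih =>
    match n with
    | 0 => intro k; simp [cheb]; ring
    | 1 => intro k; have := h k; push_cast; simp only [cheb]; linarith
    | (n+2) =>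
      intro k
      have h1 := h (k + (n+1 : ℕ))
      have h2 := h (k - (n+1 : ℕ))
      have i1 := ih (n+1) (by omega) k
      have i2 := ih n (by omega) k
      have e1 : (k + ((n:ℤ)+1)) + 1 = k + ((n:ℕ)+2 : ℕ) := by push_cast; ring
      have e2 : (k + ((n:ℤ)+1)) - 1 = k + (n : ℕ) := by push_cast; ring
      have e3 : (k - ((n:ℤ)+1)) + 1 = k - (n : ℕ) := by push_cast; ring
      have e4 : (k - ((n:ℤ)+1)) - 1 = k - ((n:ℕ)+2 : ℕ) := by push_cast; ring
      push_cast at h1 h2 ⊢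
      rw [e1, e2] at h1
      rw [e3, e4] at h2
      have ec : cheb q (n+2) = 2*q*cheb q (n+1) - cheb q n := rfl
      push_cast at e1 e2 e3 e4 h1 h2 i1 i2
      rw [ec]
      linear_combination h1 + h2 + 2*q*i1 - i2

theorem stmt_7 (p : ℕ) (hp : 1 ≤ p) (q : ℝ) :
    (∃ z : ℤ → ℝ, z ≠ 0 ∧ (∀ k : ℤ, z (k + 1) - 2 * q * z k + z (k - 1) = 0) ∧
        ∀ k : ℤ, z (k + p) = z k) ↔
      ∃ j : ℕ, j ≤ ⌈((p : ℝ) - 1) / 2⌉₊ ∧ q = Real.cos (2 * j * Real.pi / p) := by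
  have hpR : (0:ℝ) < (p:ℝ) := by exact_mod_cast hp
  constructor
  · rintro ⟨z, hz0, hrec, hper⟩
    -- find a point where z ≠ 0
    obtain ⟨k0, hk0⟩ := Function.ne_iff.mp hz0
    -- cheb q p = 1
    have key := sol_key hrec p k0
    have h1 : z (k0 + p) = z k0 := hper k0
    have h2 : z (k0 - p) = z k0 := by
      have := hper (k0 - p)
      rw [sub_add_cancel] at this
      exact this.symm
    rw [h1, h2] at key
    have hch : cheb q p = 1 := by
      have : (2 * cheb q p - 2) * z k0 = 0 := by linarith
      rcases mul_eq_zero.mp this with h | h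
      · linarith
      · exact absurd h hk0
    -- |q| ≤ 1
    have hq1 : q ≤ 1 := by
      by_contra h
      push_neg at h
      obtain ⟨m, rfl⟩ := Nat.exists_eq_add_of_le hp
      have := (cheb_gt_one h m).2
      have := (cheb_gt_one h m).1
      rw [show 1 + m = m + 1 by omega] at hch
      linarith
    have hq2 : -1 ≤ q := by
      by_contra h
      push_neg at h
      have hq' : 1 < -q := by linarith
      obtain ⟨m, rfl⟩ := Nat.exists_eq_add_of_le hp
      have hgt : 1 < cheb (-q) (m+1) := by
        have := (cheb_gt_one hq' m).2
        have := (cheb_gt_one hq' m).1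
        linarith
      have hpar : cheb (-q) (m+1) = (-1)^(m+1) * cheb q (m+1) := cheb_neg q (m+1)
      rw [show 1 + m = m + 1 by omega] at hch
      rw [hch, mul_one] at hpar
      rcases Nat.even_or_odd (m+1) with he | ho
      · rw [he.neg_one_pow] at hpar; linarith
      · rw [ho.neg_one_pow] at hpar; linarith
    set θ := Real.arccos q with hθ
    have hcos : Real.cos θ = q := Real.cos_arccos hq2 hq1
    have hθ0 : 0 ≤ θ := Real.arccos_nonneg q
    have hθπ : θ ≤ Real.pi := Real.arccos_le_pi q
    have hcp : Real.cos ((p:ℝ) * θ) = 1 := by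
      rw [← cheb_cos θ p, hcos]; exact hch
    obtain ⟨m, hm⟩ := (Real.cos_eq_one_iff _).mp hcp
    have hπ := Real.pi_pos
    have hm0 : 0 ≤ m := by
      by_contra h
      push_neg at h
      have : (m:ℝ) * (2 * Real.pi) < 0 := by
        apply mul_neg_of_neg_of_pos
        · exact_mod_cast h
        · linarith
      nlinarith [mul_nonneg (le_of_lt hpR) hθ0]
    have hmp : 2 * m ≤ (p:ℤ) := by
      have hle : (m:ℝ) * (2 * Real.pi) ≤ (p:ℝ) * Real.pi := by
        rw [hm]
        exact mul_le_mul_of_nonneg_left hθπ (le_of_lt hpR)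
      have : (2 * (m:ℝ)) * Real.pi ≤ (p:ℝ) * Real.pi := by linarith
      have := le_of_mul_le_mul_right (by linarith : (2 * (m:ℝ)) * Real.pi ≤ (p:ℝ) * Real.pi) hπ
      exact_mod_cast this
    refine ⟨m.toNat, ?_, ?_⟩
    · have hj : 2 * m.toNat ≤ p := by omega
      rcases Nat.eq_zero_or_pos m.toNat with h0 | h0
      · simp [h0]
      · have : m.toNat - 1 < ⌈((p : ℝ) - 1) / 2⌉₊ := by
          rw [Nat.lt_ceil]
          have : ((m.toNat - 1 : ℕ) : ℝ) = (m.toNat : ℝ) - 1 := by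
            push_cast [h0]; ring
          rw [this]
          have h2j : (2 * m.toNat : ℝ) ≤ (p:ℝ) := by exact_mod_cast hj
          linarith
        omega
    · have hmθ : θ = 2 * (m.toNat : ℝ) * Real.pi / p := by
        have hmm : ((m.toNat : ℕ) : ℝ) = (m:ℝ) := by exact_mod_cast Int.toNat_of_nonneg hm0
        rw [hmm]
        field_simp
        linarith [hm]
      rw [← hcos, hmθ]
  · rintro ⟨j, hj, hq⟩
    set θ := 2 * (j:ℝ) * Real.pi / p with hθ
    refine ⟨fun k => Real.cos (k * θ), ?_, ?_, ?_⟩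
    · intro h
      have := congrFun h 0
      simp at this
    · intro k
      have e1 : ((k:ℝ) + 1) * θ = (k:ℝ) * θ + θ := by ring
      have e2 : ((k:ℝ) - 1) * θ = (k:ℝ) * θ - θ := by ring
      push_cast
      rw [e1, e2, Real.cos_add, Real.cos_sub, hq]
      ring
    · intro k
      have e : ((k:ℝ) + (p:ℝ)) * θ = (k:ℝ) * θ + ((j:ℤ):ℝ) * (2 * Real.pi) := by
        rw [hθ]
        field_simp
        push_cast; ring
      push_cast
      rw [e, Real.cos_add_int_mul_two_pi]
end

section
/- If z : ℤ → ℂ satisfies the Chebyshev recurrence z(k+1) − 2q·z(k) + z(k−1) = 0 for all k ∈ ℤ, then for each n ≥ 1 and m ∈ ℤ, the subsequence w(k) = z(nk+m) satisfies the Chebyshev recurrence w(k+1) − 2T_n(q)·w(k) + w(k−1) = 0 for all k ∈ ℤ. -/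
open Polynomial Polynomial.Chebyshev

lemma aux_cheb (q : ℂ) (z : ℤ → ℂ)
    (hz : ∀ k : ℤ, z (k + 1) - 2 * q * z k + z (k - 1) = 0) :
    ∀ n : ℕ, ∀ j : ℤ, z (j + n) + z (j - n) = 2 * (T ℂ n).eval q * z j := by
  intro n
  induction n using Nat.twoStepInduction with
  | zero => intro j; simp [T_zero]; ring
  | one =>
    intro j
    have h := hz j
    simp only [T_one, eval_X, Nat.cast_one]
    linear_combination h
  | more n ih1 ih2 =>
    intro j
    have h1 := hz (j + n + 1)
    have h2 := hz (j - n - 1)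
    have i1 := ih1 j
    have i2 := ih2 j
    have hT : (T ℂ (((n : ℤ)) + 2)).eval q =
        2 * q * (T ℂ ((n : ℤ) + 1)).eval q - (T ℂ (n : ℤ)).eval q := by
      rw [T_add_two]; simp
    push_cast at i2 ⊢
    rw [hT]
    have e1 : j + ((n : ℤ) + 2) = (j + n + 1) + 1 := by ring
    have e2 : j - ((n : ℤ) + 2) = (j - n - 1) - 1 := by ring
    have e3 : j + n + 1 - 1 = j + n := by ring
    have e4 : j - n - 1 + 1 = j - n := by ring
    rw [e1, e2]
    rw [e3] at h1
    rw [e4] at h2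
    have e5 : j + ((n : ℤ) + 1) = j + n + 1 := by ring
    have e6 : j - ((n : ℤ) + 1) = j - n - 1 := by ring
    rw [e5, e6] at i2
    linear_combination h1 + h2 + 2 * q * i2 - i1

theorem stmt_10 (q : ℂ) (n : ℕ) (hn : 1 ≤ n) (m : ℤ) (z : ℤ → ℂ)
    (hz : ∀ k : ℤ, z (k + 1) - 2 * q * z k + z (k - 1) = 0) :
    ∀ k : ℤ, z (n * (k + 1) + m) - 2 * (T ℂ n).eval q * z (n * k + m) +
      z (n * (k - 1) + m) = 0 := by
  intro k
  have h := aux_cheb q z hz n (n * k + m)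
  have e1 : (n : ℤ) * (k + 1) + m = (n * k + m) + n := by ring
  have e2 : (n : ℤ) * (k - 1) + m = (n * k + m) - n := by ring
  rw [e1, e2]
  linear_combination h
end

section
/- Let a, c ∈ ℂ*, b ∈ ℂ. The difference equation a·z(k+1) − b·z(k) + c·z(k−1) = 0 has a nonzero quasi-periodic solution with period p and ratio r (i.e., z(k+p) = r·z(k) for all k) if and only if r = √(c^p/a^p)·(T_p(q) ± √(T_p(q)² − 1)) where q = b/(2√(ac)) for a fixed choice of square roots. -/
open Polynomial Polynomial.Chebyshev

lemma cheb_key (μ : ℂ) (hμ : μ ≠ 0) (n : ℤ) :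
    (T ℂ n).eval ((μ + μ⁻¹) / 2) = (μ ^ n + μ ^ (-n)) / 2 := by
  set θ : ℂ := -Complex.I * Complex.log μ with hθ
  have hIθ : Complex.I * θ = Complex.log μ := by
    rw [hθ]; rw [show Complex.I * (-Complex.I * Complex.log μ)
      = -(Complex.I * Complex.I) * Complex.log μ by ring, Complex.I_mul_I]; ring
  have hexp : Complex.exp (Complex.I * θ) = μ := by rw [hIθ, Complex.exp_log hμ]
  have h2 : ∀ m : ℤ, Complex.cos (m * θ) = (μ ^ m + μ ^ (-m)) / 2 := by
    intro m
    have e1 : Complex.exp ((m : ℂ) * θ * Complex.I) = μ ^ m := by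
      rw [show (m : ℂ) * θ * Complex.I = (m : ℂ) * (Complex.I * θ) by ring,
        Complex.exp_int_mul, hexp]
    have e2 : Complex.exp (-((m : ℂ) * θ) * Complex.I) = μ ^ (-m) := by
      rw [show -((m : ℂ) * θ) * Complex.I = ((-m : ℤ) : ℂ) * (Complex.I * θ) by
        push_cast; ring, Complex.exp_int_mul, hexp]
    rw [Complex.cos, e1, e2]
  have hcos : Complex.cos θ = (μ + μ⁻¹) / 2 := by
    have := h2 1
    simpa [zpow_one, zpow_neg] using this
  rw [← hcos, T_complex_cos, h2]

lemma geom_of_step (f : ℤ → ℂ) (l : ℂ) (hl : l ≠ 0)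
    (h : ∀ k : ℤ, f (k + 1) = l * f k) : ∀ k : ℤ, f k = l ^ k * f 0 := by
  intro k
  induction k using Int.induction_on with
  | zero => simp
  | succ n ih =>
      rw [h n, ih, zpow_add_one₀ hl]; ring
  | pred n ih =>
      have := h (-n - 1)
      rw [show (-n - 1 + 1 : ℤ) = -n by ring] at this
      have : f (-n - 1) = l⁻¹ * f (-n) := by
        field_simp [this]
        rw [this]; ring
      rw [this, ih, show (-n - 1 : ℤ) = -n + (-1) by ring, zpow_add₀ hl]
      simp [zpow_neg]
      ring

theorem stmt_12 (a b c : ℂ) (ha : a ≠ 0) (hc : c ≠ 0) (p : ℕ) (hp : 1 ≤ p)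
    (r : ℂ) (hr : r ≠ 0) (s : ℂ) (hs : s ^ 2 = a * c) :
    (∃ z : ℤ → ℂ, z ≠ 0 ∧
        (∀ k : ℤ, a * z (k + 1) - b * z k + c * z (k - 1) = 0) ∧
        ∀ k : ℤ, z (k + p) = r * z k) ↔
      ∃ w : ℂ, w ^ 2 = (T ℂ p).eval (b / (2 * s)) ^ 2 - 1 ∧
        r = (s / a) ^ p * ((T ℂ p).eval (b / (2 * s)) + w) := by
  have hs0 : s ≠ 0 := by
    intro h; rw [h] at hs; exact (mul_ne_zero ha hc) (by simpa using hs.symm)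
  constructor
  · rintro ⟨z, hz0, hrec, hqp⟩
    -- extract a characteristic root l with r = l^p
    have key : ∃ l : ℂ, l ≠ 0 ∧ a * l ^ 2 - b * l + c = 0 ∧ r = l ^ (p : ℤ) := by
      obtain ⟨D, hD⟩ := IsAlgClosed.exists_pow_nat_eq (b ^ 2 - 4 * (a * c)) (n := 2) two_pos
      set l₁ := (b + D) / (2 * a) with hl₁
      set l₂ := (b - D) / (2 * a) with hl₂
      have h1 : a * (l₁ + l₂) = b := by rw [hl₁, hl₂]; field_simp; ring
      have h2 : a * (l₁ * l₂) = c := by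
        rw [hl₁, hl₂]; field_simp; linear_combination -hD
      have hl₂0 : l₂ ≠ 0 := by
        intro h; rw [h, mul_zero, mul_zero] at h2; exact hc h2.symm
      have hl₁0 : l₁ ≠ 0 := by
        intro h; rw [h, zero_mul, mul_zero] at h2; exact hc h2.symm
      have hq₁ : a * l₁ ^ 2 - b * l₁ + c = 0 := by
        linear_combination l₁ * h1 - h2
      have hq₂ : a * l₂ ^ 2 - b * l₂ + c = 0 := by
        linear_combination l₂ * h1 - h2
      set u : ℤ → ℂ := fun k => z (k + 1) - l₁ * z k with hu
      have hstep : ∀ k : ℤ, u (k + 1) = l₂ * u k := by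
        intro k
        apply mul_left_cancel₀ ha
        have h := hrec (k + 1)
        rw [add_sub_cancel_right] at h
        simp only [hu]
        linear_combination h - z (k + 1) * h1 + z k * h2
      have hugeom := geom_of_step u l₂ hl₂0 hstep
      by_cases hU : ∀ k : ℤ, u k = 0
      · -- z is geometric with ratio l₁
        have hz1 : ∀ k : ℤ, z (k + 1) = l₁ * z k := by
          intro k
          have := hU k
          simp only [hu] at this
          linear_combination this
        have hzg := geom_of_step z l₁ hl₁0 hz1
        have hz00 : z 0 ≠ 0 := by
          intro h0
          apply hz0
          funext k
          rw [hzg k, h0, mul_zero]; rfl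
        refine ⟨l₁, hl₁0, hq₁, ?_⟩
        have h := hqp 0
        rw [hzg ((0 : ℤ) + p), zero_add] at h
        exact (mul_right_cancel₀ hz00 h).symm
      · push_neg at hU
        obtain ⟨k₀, hk₀⟩ := hU
        refine ⟨l₂, hl₂0, hq₂, ?_⟩
        have hup : u (k₀ + p) = r * u k₀ := by
          simp only [hu]
          rw [show (k₀ : ℤ) + p + 1 = (k₀ + 1) + p by ring, hqp (k₀ + 1), hqp k₀]
          ring
        rw [hugeom (k₀ + p), hugeom k₀, zpow_add₀ hl₂0] at hup
        have : (l₂ ^ (p : ℤ) - r) * (l₂ ^ k₀ * u 0) = 0 := by linear_combination hup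
        rcases mul_eq_zero.1 this with h | h
        · exact (sub_eq_zero.1 h).symm
        · exfalso; apply hk₀; rw [hugeom k₀, h]
    obtain ⟨l, hl0, hlq, hrl⟩ := key
    set μ := a * l / s with hμdef
    have hμ0 : μ ≠ 0 := by
      simp only [hμdef]; exact div_ne_zero (mul_ne_zero ha hl0) hs0
    have hAL : a * l ≠ 0 := mul_ne_zero ha hl0
    have hsum1 : μ + μ⁻¹ = b / s := by
      rw [hμdef, inv_div, div_add_div _ _ hs0 hAL,
        div_eq_div_iff (mul_ne_zero hs0 hAL) hs0]
      linear_combination (s * a) * hlq + s * hs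
    have hsum : (μ + μ⁻¹) / 2 = b / (2 * s) := by
      rw [hsum1]; ring
    have hT := cheb_key μ hμ0 (p : ℤ)
    rw [hsum] at hT
    set x := μ ^ (p : ℤ) with hxdef
    have hx0 : x ≠ 0 := zpow_ne_zero _ hμ0
    have hxinv : μ ^ (-(p : ℤ)) = x⁻¹ := by rw [zpow_neg, hxdef]
    rw [hxinv] at hT
    refine ⟨(x - x⁻¹) / 2, ?_, ?_⟩
    · rw [hT]; field_simp; ring
    · rw [hT, show ((x + x⁻¹)/2 + (x - x⁻¹)/2) = x by ring]
      have hsa : (s / a) ^ p * x = l ^ p := by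
        rw [hxdef, zpow_natCast, ← mul_pow]
        congr 1
        rw [hμdef]; field_simp
      rw [hsa, hrl, zpow_natCast]
  · rintro ⟨w, hw, hrw⟩
    set q := b / (2 * s) with hqdef
    set Tq := (T ℂ (p : ℤ)).eval q with hTqdef
    obtain ⟨δ, hδ⟩ := IsAlgClosed.exists_pow_nat_eq (q ^ 2 - 1) (n := 2) two_pos
    have hmm : (q + δ) * (q - δ) = 1 := by linear_combination -hδ
    have hμ₀0 : q + δ ≠ 0 := by
      intro h; rw [h, zero_mul] at hmm; exact one_ne_zero hmm.symm
    have hμ₀inv : (q + δ)⁻¹ = q - δ := by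
      field_simp [hμ₀0]; linear_combination -hmm
    have hμ₀sum : ((q + δ) + (q + δ)⁻¹) / 2 = q := by rw [hμ₀inv]; ring
    have hT := cheb_key (q + δ) hμ₀0 (p : ℤ)
    rw [hμ₀sum] at hT
    set ρ := Tq + w with hρdef
    have hρ0 : ρ ≠ 0 := by
      intro h
      rw [h, mul_zero] at hrw
      exact hr hrw
    set x := (q + δ) ^ (p : ℤ) with hxdef
    have hx0 : x ≠ 0 := zpow_ne_zero _ hμ₀0
    have hxinv : (q + δ) ^ (-(p : ℤ)) = x⁻¹ := by rw [zpow_neg, hxdef]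
    rw [hxinv] at hT
    have hTq : Tq = (x + x⁻¹) / 2 := by rw [hTqdef]; exact hT
    have hcases : (ρ - x) * (ρ - x⁻¹) = 0 := by
      have hxx : x * x⁻¹ = 1 := mul_inv_cancel₀ hx0
      have hw' : w ^ 2 = Tq ^ 2 - 1 := by rw [hTqdef]; exact hw
      linear_combination hw' + hxx + 2 * ρ * hTq + (ρ - Tq + w) * hρdef
    obtain ⟨μ, hμ0, hμsum, hρx⟩ :
        ∃ μ : ℂ, μ ≠ 0 ∧ μ + μ⁻¹ = 2 * q ∧ ρ = μ ^ (p : ℤ) := by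
      rcases mul_eq_zero.1 hcases with h | h
      · exact ⟨q + δ, hμ₀0, by rw [hμ₀inv]; ring, by linear_combination h⟩
      · refine ⟨(q + δ)⁻¹, inv_ne_zero hμ₀0, ?_, ?_⟩
        · rw [inv_inv, hμ₀inv]; ring
        · rw [inv_zpow, ← hxdef]
          exact sub_eq_zero.1 h
    set l := s * μ / a with hldef
    have hl0 : l ≠ 0 := by
      simp only [hldef]; exact div_ne_zero (mul_ne_zero hs0 hμ0) ha
    have hbμ : s * (μ + μ⁻¹) = b := by
      rw [hμsum, hqdef]
      field_simp
    have hμμ : μ * μ⁻¹ = 1 := mul_inv_cancel₀ hμ0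
    have hl2 : a * l ^ 2 = c * μ ^ 2 := by
      rw [hldef]
      field_simp
      linear_combination hs
    have hμ2 : μ ^ 2 = 2 * q * μ - 1 := by
      linear_combination μ * hμsum - hμμ
    have hb : b = 2 * q * s := by
      rw [hqdef]; field_simp
    have hbl : b * l = c * μ ^ 2 + c := by
      rw [hldef, hb]
      field_simp
      linear_combination (-(a*c)) * hμ2 + 2 * q * μ * hs
    have hquad : a * l ^ 2 - b * l + c = 0 := by
      linear_combination hl2 - hbl
    have hrl : r = l ^ (p : ℤ) := by
      rw [zpow_natCast, hldef, show s * μ / a = (s / a) * μ by ring, mul_pow,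
        ← zpow_natCast μ, ← hρx]
      exact hrw
    refine ⟨fun k => l ^ k, ?_, ?_, ?_⟩
    · intro h
      have := congrFun h 0
      simp at this
    · intro k
      show a * l ^ (k + 1) - b * l ^ k + c * l ^ (k - 1) = 0
      have ek : l ^ k = l * l ^ (k - 1) := by
        rw [mul_comm, ← zpow_add_one₀ hl0, sub_add_cancel]
      have ek1 : l ^ (k + 1) = l * l ^ k := by
        rw [zpow_add_one₀ hl0]; ring
      rw [ek1, ek]
      linear_combination (l ^ (k - 1)) * hquad
    · intro k
      show l ^ (k + (p : ℤ)) = r * l ^ k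
      rw [zpow_add₀ hl0, hrl]; ring
end

section
/- For every m ≥ 1: ∑_{j=0}^{m} L(2m, j) = 2·T_m(3/2) and ∑_{j=0}^{m} L(2m+1, j) = W_m(3/2), where L(p,j) = (p/(p−j))·C(p−j,j) counts cyclically non-adjacent j-subsets of ℤ/pℤ, T_m is the Chebyshev polynomial of the first kind, and W_m(x) = U_m(x) + U_{m−1}(x) is the Chebyshev polynomial of the fourth kind. -/
open Polynomial Polynomial.Chebyshev

noncomputable def L (p j : ℕ) : ℚ := (p : ℚ) / ((p : ℚ) - j) * Nat.choose (p - j) j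

lemma Lcast (p j : ℕ) (h : j ≤ p) :
    L p j = (p : ℚ) / ((p - j : ℕ) : ℚ) * ((p - j).choose j : ℚ) := by
  unfold L; rw [Nat.cast_sub h]

lemma key (b k : ℕ) : L (b+k+3) (k+1) = L (b+k+2) (k+1) + L (b+k+1) k := by
  have hc : ((b+1).choose (k+1) : ℚ) * (k+1) = ((b+1).choose k : ℚ) * ((b:ℚ) + 1 - k) := by
    rcases le_or_gt k (b+1) with h | h
    · have h3 := congrArg (fun n : ℕ => (n:ℚ)) (Nat.choose_succ_right_eq (b+1) k)
      push_cast [Nat.cast_sub h] at h3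
      linear_combination h3
    · have h1 : (b+1).choose k = 0 := Nat.choose_eq_zero_of_lt h
      have h2 : (b+1).choose (k+1) = 0 := Nat.choose_eq_zero_of_lt (by omega)
      simp [h1, h2]
  rw [Lcast _ _ (by omega), Lcast _ _ (by omega), Lcast _ _ (by omega)]
  have e1 : b+k+3-(k+1) = b+2 := by omega
  have e2 : b+k+2-(k+1) = b+1 := by omega
  have e3 : b+k+1-k = b+1 := by omega
  rw [e1, e2, e3, Nat.choose_succ_succ]
  have d1 : ((b:ℚ)+2) ≠ 0 := by positivity
  have d2 : ((b:ℚ)+1) ≠ 0 := by positivity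
  push_cast
  field_simp
  linear_combination -hc

noncomputable def A (m : ℕ) : ℚ := ∑ j ∈ Finset.range (m+1), L (2*m) j
noncomputable def B (m : ℕ) : ℚ := ∑ j ∈ Finset.range (m+1), L (2*m+1) j

lemma L_zero (p : ℕ) (hp : 1 ≤ p) : L p 0 = 1 := by
  unfold L
  simp only [Nat.cast_zero, sub_zero, Nat.sub_zero, Nat.choose_zero_right, Nat.cast_one, mul_one]
  exact div_self (Nat.cast_ne_zero.mpr (by omega))

lemma L_top (m : ℕ) : L (2*m+1) (m+1) = 0 := by
  unfold L
  have : 2*m+1 - (m+1) = m := by omega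
  rw [this, Nat.choose_eq_zero_of_lt (by omega)]
  simp

lemma recB (m : ℕ) (hm : 1 ≤ m) : B m = A m + B (m-1) := by
  obtain ⟨n, rfl⟩ := Nat.exists_eq_add_of_le hm
  have hA : A (1+n) = ∑ i ∈ Finset.range (1+n), L (2*(1+n)) (i+1) + 1 := by
    rw [A, Finset.sum_range_succ', L_zero _ (by omega)]
  have hstep : ∀ i ∈ Finset.range (1+n),
      L (2*(1+n)+1) (i+1) = L (2*(1+n)) (i+1) + L (2*(1+n)-1) i := by
    intro i hi
    rw [Finset.mem_range] at hi
    obtain ⟨b, hb⟩ : ∃ b, 2*(1+n)+1 = b + i + 3 := ⟨2*(1+n)-2-i, by omega⟩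
    have h2 : 2*(1+n) = b + i + 2 := by omega
    have h3 : 2*(1+n)-1 = b + i + 1 := by omega
    rw [hb, h3, h2, key]
  rw [B, Finset.sum_range_succ', L_zero _ (by omega), Finset.sum_congr rfl hstep,
    Finset.sum_add_distrib]
  have hB' : B (1+n-1) = ∑ i ∈ Finset.range (1+n), L (2*(1+n)-1) i := by
    rw [show 1+n-1 = n from by omega, B, show 2*(1+n)-1 = 2*n+1 from by omega,
      show 1+n = n+1 from by omega]
  rw [hB', hA]
  ring

lemma recA (m : ℕ) (hm : 1 ≤ m) : A (m+1) = B m + A m := by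
  have hstep : ∀ i ∈ Finset.range (m+1),
      L (2*(m+1)) (i+1) = L (2*m+1) (i+1) + L (2*m) i := by
    intro i hi
    rw [Finset.mem_range] at hi
    obtain ⟨b, hb⟩ : ∃ b, 2*(m+1) = b + i + 3 := ⟨2*m-1-i, by omega⟩
    have h2 : 2*m+1 = b + i + 2 := by omega
    have h3 : 2*m = b + i + 1 := by omega
    rw [hb, h2, h3, key]
  have hBsum : ∑ i ∈ Finset.range (m+1), L (2*m+1) (i+1) = B m - 1 := by
    have e1 : ∑ i ∈ Finset.range (m+1), L (2*m+1) (i+1)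
        = ∑ i ∈ Finset.range m, L (2*m+1) (i+1) + L (2*m+1) (m+1) :=
      Finset.sum_range_succ _ _
    have e2 : B m = ∑ i ∈ Finset.range m, L (2*m+1) (i+1) + L (2*m+1) 0 :=
      Finset.sum_range_succ' _ _
    rw [e1, L_top, e2, L_zero _ (by omega)]
    ring
  rw [A, Finset.sum_range_succ' (fun j => L (2*(m+1)) j) (m+1), L_zero _ (by omega),
    Finset.sum_congr rfl hstep, Finset.sum_add_distrib, hBsum]
  have : ∑ i ∈ Finset.range (m+1), L (2*m) i = A m := rfl
  rw [this]
  ring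

noncomputable def f (n : ℕ) : ℚ := (Nat.fib n : ℚ)
noncomputable def l (n : ℕ) : ℚ := 2 * f (n + 1) - f n

lemma f_add_two (n : ℕ) : f (n + 2) = f (n + 1) + f n := by
  simp only [f, Nat.fib_add_two]; push_cast; ring

lemma l_add_two (n : ℕ) : l (n + 2) = l (n + 1) + l n := by
  simp only [l, f_add_two]; ring

lemma t_rec (n : ℕ) : (T ℚ ((n:ℤ)+2)).eval (3/2 : ℚ)
    = 3 * (T ℚ ((n:ℤ)+1)).eval (3/2) - (T ℚ (n:ℤ)).eval (3/2) := by
  rw [T_add_two]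
  simp only [eval_sub, eval_mul, eval_ofNat, eval_X]
  ring

lemma u_rec (n : ℕ) : (U ℚ ((n:ℤ)+2)).eval (3/2 : ℚ)
    = 3 * (U ℚ ((n:ℤ)+1)).eval (3/2) - (U ℚ (n:ℤ)).eval (3/2) := by
  rw [U_add_two]
  simp only [eval_sub, eval_mul, eval_ofNat, eval_X]
  ring

lemma Teval : ∀ n : ℕ, 2 * (T ℚ (n:ℤ)).eval (3/2 : ℚ) = l (2*n)
  | 0 => by simp [T_zero, l, f]
  | 1 => by simp [T_one, l, f]; norm_num
  | (n+2) => by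
    have h1 := Teval n
    have h2 := Teval (n+1)
    have : ((n:ℤ)+2) = ((n+2 : ℕ) : ℤ) := by push_cast; ring
    rw [← this, t_rec]
    have e2 : ((n+1 : ℕ) : ℤ) = (n:ℤ)+1 := by push_cast; ring
    rw [e2] at h2
    have hl : l (2*(n+2)) = 3 * l (2*(n+1)) - l (2*n) := by
      have a1 := l_add_two (2*n)
      have a2 := l_add_two (2*n+1)
      have a3 := l_add_two (2*n+2)
      have e : 2*(n+2) = 2*n+2+2 := by ring
      have e' : 2*(n+1) = 2*n+2 := by ring
      rw [e, e', a3, a2, a1]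
      ring
    rw [hl]
    linarith

lemma Ueval : ∀ n : ℕ, (U ℚ (n:ℤ)).eval (3/2 : ℚ) = f (2*n+2)
  | 0 => by simp [U_zero, f]
  | 1 => by simp [U_one, f]; norm_num
  | (n+2) => by
    have h1 := Ueval n
    have h2 := Ueval (n+1)
    have : ((n:ℤ)+2) = ((n+2 : ℕ) : ℤ) := by push_cast; ring
    rw [← this, u_rec]
    have e2 : ((n+1 : ℕ) : ℤ) = (n:ℤ)+1 := by push_cast; ring
    rw [e2] at h2
    have hf : f (2*(n+2)+2) = 3 * f (2*(n+1)+2) - f (2*n+2) := by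
      have a1 := f_add_two (2*n+2)
      have a2 := f_add_two (2*n+3)
      have a3 := f_add_two (2*n+4)
      have e : 2*(n+2)+2 = 2*n+4+2 := by ring
      have e' : 2*(n+1)+2 = 2*n+4 := by ring
      rw [e, e', a3, a2, a1]
      ring
    rw [hf]
    linarith

lemma main_lemma : ∀ m : ℕ, 1 ≤ m → A m = l (2*m) ∧ B m = l (2*m+1) := by
  intro m hm
  induction m with
  | zero => omega
  | succ n ih =>
    rcases Nat.eq_or_lt_of_le hm with h | h
    · have h1 : n = 0 := by omega
      subst h1
      constructor
      · rw [show A 1 = L 2 0 + L 2 1 from by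
          simp [A, Finset.sum_range_succ]]
        rw [L_zero _ (by omega)]
        unfold L l f
        norm_num
      · rw [show B 1 = L 3 0 + L 3 1 from by
          simp [B, Finset.sum_range_succ]]
        rw [L_zero _ (by omega)]
        unfold L l f
        norm_num
    · have hn : 1 ≤ n := by omega
      obtain ⟨hA, hB⟩ := ih hn
      have rA : A (n+1) = B n + A n := recA n hn
      have rB : B (n+1) = A (n+1) + B n := by
        have := recB (n+1) (by omega)
        simpa using this
      constructor
      · rw [rA, hA, hB, show 2*(n+1) = 2*n+1+1 from by ring,
          show 2*n+1+1 = (2*n)+2 from by ring, l_add_two]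
      · rw [rB, rA, hA, hB]
        rw [show 2*(n+1)+1 = (2*n+1)+2 from by ring, l_add_two (2*n+1),
          show 2*n+1+1 = (2*n)+2 from by ring, l_add_two]

theorem stmt_17 (m : ℕ) (hm : 1 ≤ m) :
    (∑ j ∈ Finset.range (m + 1), L (2 * m) j = 2 * (T ℚ m).eval (3 / 2)) ∧
    (∑ j ∈ Finset.range (m + 1), L (2 * m + 1) j =
      (U ℚ m + U ℚ (m - 1)).eval (3 / 2)) := by
  obtain ⟨hA, hB⟩ := main_lemma m hm
  constructor
  · show A m = _
    rw [hA, ← Teval]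
  · show B m = _
    rw [hB]
    obtain ⟨n, rfl⟩ := Nat.exists_eq_add_of_le hm
    rw [eval_add, Ueval, show ((1+n : ℕ):ℤ) - 1 = (n:ℤ) from by push_cast; ring, Ueval]
    have h1 : f (2*n+4) = f (2*n+3) + f (2*n+2) := by
      have := f_add_two (2*n+2)
      simpa [show 2*n+2+2 = 2*n+4 from by omega, show 2*n+2+1 = 2*n+3 from by omega] using this
    rw [show 2*(1+n)+1 = 2*n+3 from by ring, show 2*(1+n) = 2*n+2 from by ring, l,
      show 2*n+3+1 = 2*n+4 from by ring, show 2*n+2+2 = 2*n+4 from by ring]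
    linarith [h1]
end

section
/- For all m ≥ 0, k ≥ 0 and real x: T_{m(2k+1)}(x) = T_m(x)·V_k(T_{2m}(x)) and U_{2k(m+1)+m}(x) = U_m(x)·W_k(T_{2(m+1)}(x)), where V_k(x) = U_k(x) − U_{k−1}(x) and W_k(x) = U_k(x) + U_{k−1}(x) are the Chebyshev polynomials of third and fourth kind. -/
open Polynomial Polynomial.Chebyshev Real

private lemma sin_ne_zero_of_irr {θ : ℝ} (h : Irrational (θ / π)) {j : ℤ} (hj : j ≠ 0) :
    Real.sin ((j : ℝ) * θ) ≠ 0 := by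
  intro hs
  obtain ⟨n, hn⟩ := Real.sin_eq_zero_iff.1 hs
  apply h
  refine ⟨(n : ℚ) / (j : ℚ), ?_⟩
  have hπ : (π : ℝ) ≠ 0 := Real.pi_ne_zero
  have hjR : (j : ℝ) ≠ 0 := Int.cast_ne_zero.2 hj
  push_cast
  field_simp
  linarith [hn]

private lemma cos_ne_zero_of_irr {θ : ℝ} (h : Irrational (θ / π)) {j : ℤ} (hj : j ≠ 0) :
    Real.cos ((j : ℝ) * θ) ≠ 0 := by
  intro hs
  obtain ⟨n, hn⟩ := Real.cos_eq_zero_iff.1 hs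
  apply h
  refine ⟨(2 * (n : ℚ) + 1) / (2 * (j : ℚ)), ?_⟩
  have hπ : (π : ℝ) ≠ 0 := Real.pi_ne_zero
  have hjR : (j : ℝ) ≠ 0 := Int.cast_ne_zero.2 hj
  push_cast
  field_simp
  linarith [hn]

private lemma good_infinite :
    {x : ℝ | ∃ θ : ℝ, θ ∈ Set.Ioo 0 π ∧ Irrational (θ / π) ∧ Real.cos θ = x}.Infinite := by
  have hπ : (0 : ℝ) < π := Real.pi_pos
  have hsq : Real.sqrt 2 ^ 2 = 2 := Real.sq_sqrt (by norm_num)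
  have hs0 : (0:ℝ) ≤ Real.sqrt 2 := Real.sqrt_nonneg 2
  have hs2 : (1 : ℝ) < Real.sqrt 2 := by nlinarith
  have hs2' : Real.sqrt 2 < 2 := by nlinarith
  set f : ℕ → ℝ := fun n => Real.cos (π * (Real.sqrt 2 / (n + 2))) with hf
  have hmem : ∀ n : ℕ, π * (Real.sqrt 2 / (n + 2)) ∈ Set.Ioo 0 π := by
    intro n
    have hn2 : (0:ℝ) < (n:ℝ) + 2 := by positivity
    constructor
    · positivity
    · have h1 : Real.sqrt 2 / ((n:ℝ) + 2) < 1 := by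
        rw [div_lt_one hn2]; nlinarith
      exact mul_lt_of_lt_one_right hπ h1
  have hirr : ∀ n : ℕ, Irrational (π * (Real.sqrt 2 / (n + 2)) / π) := by
    intro n
    have : π * (Real.sqrt 2 / (n + 2)) / π = Real.sqrt 2 / ((n:ℝ) + 2) := by
      field_simp
    rw [this, show ((n:ℝ) + 2) = ((n + 2 : ℕ) : ℝ) by push_cast; ring]
    exact irrational_sqrt_two.div_natCast (by omega)
  refine Set.infinite_of_injective_forall_mem (f := f) ?_ ?_
  · intro a b hab
    have ha := hmem a
    have hb := hmem b
    have := Real.injOn_cos (Set.mem_Icc_of_Ioo ha) (Set.mem_Icc_of_Ioo hb) hab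
    have h2 : Real.sqrt 2 ≠ 0 := by positivity
    have ha2 : ((a:ℝ) + 2) ≠ 0 := by positivity
    have hb2 : ((b:ℝ) + 2) ≠ 0 := by positivity
    field_simp at this
    exact_mod_cast (add_right_cancel this).symm
  · intro n
    exact ⟨_, hmem n, hirr n, rfl⟩

private lemma sin_sub_sin' (a b : ℝ) :
    Real.sin (a + 2 * b) - Real.sin a = 2 * Real.cos (a + b) * Real.sin b := by
  rw [show a + 2 * b = (a + b) + b by ring, show a = (a + b) - b by ring,
    Real.sin_add, Real.sin_sub]
  ring

private lemma sin_add_sin' (a b : ℝ) :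
    Real.sin (a + 2 * b) + Real.sin a = 2 * Real.sin (a + b) * Real.cos b := by
  rw [show a + 2 * b = (a + b) + b by ring, show a = (a + b) - b by ring,
    Real.sin_add, Real.sin_sub]
  ring

private lemma U_eval_cos {θ : ℝ} (hθ : Real.sin θ ≠ 0) (n : ℤ) :
    (U ℝ n).eval (Real.cos θ) = Real.sin ((n + 1) * θ) / Real.sin θ := by
  rw [eq_div_iff hθ]
  exact U_real_cos θ n

private lemma U_eval_one (n : ℤ) : (U ℝ n).eval 1 = n + 1 := by
  induction n using Polynomial.Chebyshev.induct with
  | zero => simp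
  | one => norm_num [U_one]
  | add_two n h1 h2 =>
      have h := congrArg (Polynomial.eval (1:ℝ)) (U_add_two ℝ n)
      simp only [eval_sub, eval_mul, eval_ofNat, eval_X] at h
      rw [h, h1, h2]; push_cast; ring
  | neg_add_one n h1 h2 =>
      have h := congrArg (Polynomial.eval (1:ℝ)) (U_sub_one ℝ (-n))
      simp only [eval_sub, eval_mul, eval_ofNat, eval_X] at h
      rw [h, h1, h2]; push_cast; ring

private lemma part1 (m k : ℕ) (hm : m ≠ 0) :
    T ℝ (m * (2 * k + 1)) = T ℝ m * (U ℝ k - U ℝ ((k : ℤ) - 1)).comp (T ℝ (2 * m)) := by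
  apply Polynomial.eq_of_infinite_eval_eq
  refine good_infinite.mono ?_
  rintro x ⟨θ, hIoo, hirr, rfl⟩
  simp only [Set.mem_setOf_eq, eval_comp, eval_mul, eval_sub]
  have hsb : Real.sin ((m:ℝ) * θ) ≠ 0 := by
    have h := sin_ne_zero_of_irr hirr (j := (m:ℤ)) (by exact_mod_cast hm)
    simpa using h
  have hcb : Real.cos ((m:ℝ) * θ) ≠ 0 := by
    have h := cos_ne_zero_of_irr hirr (j := (m:ℤ)) (by exact_mod_cast hm)
    simpa using h
  have hφ : Real.sin (2 * ((m:ℝ) * θ)) ≠ 0 := by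
    have h := sin_ne_zero_of_irr hirr (j := (2 * m : ℤ)) (by simp [hm])
    have e : ((2 * (m:ℤ) : ℤ) : ℝ) * θ = 2 * ((m:ℝ) * θ) := by push_cast; ring
    rwa [e] at h
  rw [T_real_cos, T_real_cos, T_real_cos,
    show ((2 * (m:ℤ) : ℤ) : ℝ) * θ = 2 * ((m:ℝ) * θ) by push_cast; ring,
    U_eval_cos hφ, U_eval_cos hφ]
  push_cast
  rw [sub_add_cancel]

  rw [show ((m:ℝ) * (2 * (k:ℝ) + 1)) * θ = 2 * (k:ℝ) * ((m:ℝ) * θ) + (m:ℝ) * θ by ring,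
      show ((k:ℝ) + 1) * (2 * ((m:ℝ) * θ)) = 2 * (k:ℝ) * ((m:ℝ) * θ) + 2 * ((m:ℝ) * θ) by
        ring,
      show (k:ℝ) * (2 * ((m:ℝ) * θ)) = 2 * (k:ℝ) * ((m:ℝ) * θ) by ring,
    ← sub_div, ← mul_div_assoc, eq_div_iff hφ]
  linear_combination
    (Real.cos (2 * (k:ℝ) * ((m:ℝ) * θ) + (m:ℝ) * θ)) * Real.sin_two_mul ((m:ℝ) * θ) -
      Real.cos ((m:ℝ) * θ) * sin_sub_sin' (2 * (k:ℝ) * ((m:ℝ) * θ)) ((m:ℝ) * θ)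

private lemma part2 (m k : ℕ) :
    U ℝ (2 * k * (m + 1) + m) =
      U ℝ m * (U ℝ k + U ℝ ((k : ℤ) - 1)).comp (T ℝ (2 * (m + 1))) := by
  apply Polynomial.eq_of_infinite_eval_eq
  refine good_infinite.mono ?_
  rintro x ⟨θ, hIoo, hirr, rfl⟩
  simp only [Set.mem_setOf_eq, eval_comp, eval_mul, eval_add]
  have hθ : Real.sin θ ≠ 0 := by
    have h := sin_ne_zero_of_irr hirr (j := (1:ℤ)) one_ne_zero
    simpa using h
  have hsa : Real.sin (((m:ℝ) + 1) * θ) ≠ 0 := by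
    have h := sin_ne_zero_of_irr hirr (j := ((m:ℤ) + 1)) (by omega)
    have e : (((m:ℤ) + 1 : ℤ) : ℝ) * θ = ((m:ℝ) + 1) * θ := by push_cast; ring
    rwa [e] at h
  have hca : Real.cos (((m:ℝ) + 1) * θ) ≠ 0 := by
    have h := cos_ne_zero_of_irr hirr (j := ((m:ℤ) + 1)) (by omega)
    have e : (((m:ℤ) + 1 : ℤ) : ℝ) * θ = ((m:ℝ) + 1) * θ := by push_cast; ring
    rwa [e] at h
  have hφ : Real.sin (2 * (((m:ℝ) + 1) * θ)) ≠ 0 := by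
    have h := sin_ne_zero_of_irr hirr (j := (2 * ((m:ℤ) + 1) : ℤ)) (by omega)
    have e : ((2 * ((m:ℤ) + 1) : ℤ) : ℝ) * θ = 2 * (((m:ℝ) + 1) * θ) := by push_cast; ring
    rwa [e] at h
  rw [T_real_cos,
    show ((2 * ((m:ℤ) + 1) : ℤ) : ℝ) * θ = 2 * (((m:ℝ) + 1) * θ) by push_cast; ring,
    U_eval_cos hθ, U_eval_cos hθ, U_eval_cos hφ, U_eval_cos hφ]
  push_cast
  rw [sub_add_cancel]

  rw [show (2 * (k:ℝ) * ((m:ℝ) + 1) + (m:ℝ) + 1) * θ =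
        2 * (k:ℝ) * (((m:ℝ) + 1) * θ) + ((m:ℝ) + 1) * θ by ring,
      show ((k:ℝ) + 1) * (2 * (((m:ℝ) + 1) * θ)) =
        2 * (k:ℝ) * (((m:ℝ) + 1) * θ) + 2 * (((m:ℝ) + 1) * θ) by ring,
      show (k:ℝ) * (2 * (((m:ℝ) + 1) * θ)) = 2 * (k:ℝ) * (((m:ℝ) + 1) * θ) by ring,
    ← add_div, div_mul_div_comm, div_eq_div_iff hθ (mul_ne_zero hθ hφ)]
  linear_combination
    Real.sin θ * (Real.sin (2 * (k:ℝ) * (((m:ℝ) + 1) * θ) + ((m:ℝ) + 1) * θ)) *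
        Real.sin_two_mul (((m:ℝ) + 1) * θ) -
      Real.sin θ * Real.sin (((m:ℝ) + 1) * θ) *
        sin_add_sin' (2 * (k:ℝ) * (((m:ℝ) + 1) * θ)) (((m:ℝ) + 1) * θ)

theorem stmt_19 (m k : ℕ) (x : ℝ) :
    (T ℝ (m * (2 * k + 1))).eval x =
      (T ℝ m).eval x * (U ℝ k - U ℝ ((k : ℤ) - 1)).eval ((T ℝ (2 * m)).eval x) ∧
    (U ℝ (2 * k * (m + 1) + m)).eval x =
      (U ℝ m).eval x * (U ℝ k + U ℝ ((k : ℤ) - 1)).eval ((T ℝ (2 * (m + 1))).eval x) := by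
  constructor
  · rcases Nat.eq_zero_or_pos m with hm | hm
    · subst hm
      simp only [Nat.cast_zero, zero_mul, mul_zero, T_zero, eval_one, one_mul, eval_sub]
      rw [_root_.U_eval_one, _root_.U_eval_one]
      push_cast; ring
    · rw [part1 m k (by omega)]
      simp [eval_comp]
  · rw [part2 m k]
    simp [eval_comp]
end
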